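/- arXiv:math/0106085 — 2 statements merged into one kernel-verified Lean document; each statement's English description precedes it below -/
import Mathlib

section
/- Let X be a zero-dimensional set of reals. Then X satisfies Ufin(O,Ω) if, and only if, for every continuous function Ψ : X → ℕ^ℕ and every natural number k, the image Ψ[X] is not k-dominating. -/
open Filter

/-- `f ≤* g`: `f n ≤ g n` for all but finitely many `n`. -/
def EvLE (f g : ℕ → ℕ) : Prop := ∀ᶠ n in atTop, f n ≤ g n

/-- A subset of the Baire space is dominating if every function is
eventually dominated by a member of it. -/
def Dominating (Y : Set (ℕ → ℕ)) : Prop := ∀ g : ℕ → ℕ, ∃ f ∈ Y, EvLE g f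

/-- A subset of the Baire space is bounded (w.r.t. `≤*`) if some single
function eventually dominates all its members. -/
def BoundedStar (Y : Set (ℕ → ℕ)) : Prop := ∃ g : ℕ → ℕ, ∀ f ∈ Y, EvLE f g

/-- `maxfin Y`: pointwise maxima of nonempty finite subsets of `Y`. -/
def maxfin (Y : Set (ℕ → ℕ)) : Set (ℕ → ℕ) :=
  {g | ∃ F : Finset (ℕ → ℕ), F.Nonempty ∧ ↑F ⊆ Y ∧ g = fun n => F.sup (fun f => f n)}

/-- `Y` is `k`-dominating: for each `f` there are `g_1, …, g_k ∈ Y` whose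
pointwise maximum eventually dominates `f`. -/
def KDominating (Y : Set (ℕ → ℕ)) (k : ℕ) : Prop :=
  ∀ f : ℕ → ℕ, ∃ g : Fin k → (ℕ → ℕ), (∀ i, g i ∈ Y) ∧
    ∀ᶠ n in atTop, f n ≤ Finset.univ.sup (fun i => g i n)

/-- An open cover of a topological space. -/
def IsOpenCover {α : Type*} [TopologicalSpace α] (𝒰 : Set (Set α)) : Prop :=
  (∀ u ∈ 𝒰, IsOpen u) ∧ ⋃₀ 𝒰 = Set.univ

/-- An ω-cover: a cover such that every finite subset of the space is
contained in some member. -/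
def IsOmegaCover {α : Type*} (𝒱 : Set (Set α)) : Prop :=
  ⋃₀ 𝒱 = Set.univ ∧ ∀ F : Set α, F.Finite → ∃ V ∈ 𝒱, F ⊆ V

/-- A γ-cover: an infinite cover such that every point belongs to all but
finitely many members. -/
def IsGammaCover {α : Type*} (𝒱 : Set (Set α)) : Prop :=
  ⋃₀ 𝒱 = Set.univ ∧ 𝒱.Infinite ∧ ∀ x : α, {V ∈ 𝒱 | x ∉ V}.Finite

/-- A set of reals is zero-dimensional: its subspace topology has a base of
clopen sets. -/
def ZeroDimensionalSet (X : Set ℝ) : Prop :=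
  ∃ B : Set (Set ↥X), TopologicalSpace.IsTopologicalBasis B ∧ ∀ b ∈ B, IsClopen b

/-- The Menger property `Ufin(O,O)`. -/
def MengerProp (α : Type*) [TopologicalSpace α] : Prop :=
  ∀ 𝒰 : ℕ → Set (Set α), (∀ n, (𝒰 n).Countable ∧ IsOpenCover (𝒰 n)) →
    ∃ ℱ : ℕ → Set (Set α), (∀ n, (ℱ n).Finite ∧ ℱ n ⊆ 𝒰 n) ∧
      (⋃ n, ⋃₀ ℱ n) = Set.univ

/-- The Hurewicz property `Ufin(O,Γ)`. -/
def HurewiczProp (α : Type*) [TopologicalSpace α] : Prop :=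
  ∀ 𝒰 : ℕ → Set (Set α), (∀ n, (𝒰 n).Countable ∧ IsOpenCover (𝒰 n)) →
    ∃ ℱ : ℕ → Set (Set α), (∀ n, (ℱ n).Finite ∧ ℱ n ⊆ 𝒰 n) ∧
      ((∃ n, ⋃₀ ℱ n = Set.univ) ∨ IsGammaCover {s | ∃ n, s = ⋃₀ ℱ n})

/-- The property `Ufin(O,Ω)`. -/
def UfinOOmega (α : Type*) [TopologicalSpace α] : Prop :=
  ∀ 𝒰 : ℕ → Set (Set α), (∀ n, (𝒰 n).Countable ∧ IsOpenCover (𝒰 n)) →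
    ∃ ℱ : ℕ → Set (Set α), (∀ n, (ℱ n).Finite ∧ ℱ n ⊆ 𝒰 n) ∧
      ((∃ n, ⋃₀ ℱ n = Set.univ) ∨ IsOmegaCover {s | ∃ n, s = ⋃₀ ℱ n})

/-!
A continuous `Ψ : X → ℕ^ℕ` yields the countable open covers `{x | Ψ x n ≤ m}`, `m ∈ ℕ`; conversely,
in a Lindelöf space with a clopen base every countable open cover refines to a sequence of clopen
sets, and "the first index whose set contains `x`" is a continuous coordinate of some `Ψ`. Under
this correspondence, finite selections whose unions form an ω-cover amount to a single `g` such
that every finite `A ⊆ X` satisfies `Ψ x n < g n` for all `x ∈ A` and infinitely many `n`. Such a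
`g` exists exactly when `Ψ[X]` is not `k`-dominating for any `k`: diagonalize the witnesses of
non-`k`-domination over `k`.
-/

open Set

theorem forall_not_kDominating_range_iff {α : Type*} (Ψ : α → ℕ → ℕ) :
    (∀ k, ¬ KDominating (range Ψ) k) ↔
      ∃ g : ℕ → ℕ, ∀ A : Finset α, ∃ᶠ n in atTop, ∀ x ∈ A, Ψ x n < g n := by
  constructor
  · intro h
    simp only [KDominating, not_forall, not_exists, not_and] at h
    choose f hf using h
    refine ⟨fun n => (Finset.range (n + 1)).sup fun k => f k n, fun A hA => ?_⟩
    let e := A.equivFin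
    refine hf A.card (fun i => Ψ (e.symm i)) (fun i => mem_range_self _) ?_
    filter_upwards [hA, eventually_ge_atTop A.card] with n hn hcard
    simp only [not_forall, not_lt] at hn
    obtain ⟨x, hxA, hx⟩ := hn
    calc f A.card n ≤ (Finset.range (n + 1)).sup fun k => f k n :=
          Finset.le_sup (f := fun k => f k n) (by simpa [Nat.lt_succ_iff] using hcard)
      _ ≤ Ψ x n := hx
      _ = Ψ (e.symm (e ⟨x, hxA⟩)) n := by rw [Equiv.symm_apply_apply]
      _ ≤ Finset.univ.sup fun i => Ψ (e.symm i) n :=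
          Finset.le_sup (f := fun i => Ψ (e.symm i) n) (Finset.mem_univ _)
  · classical
    rintro ⟨g, hg⟩ k hk
    -- Dominating `g + 1` rather than `g` also rules out `k = 0`.
    obtain ⟨G, hG, hev⟩ := hk fun n => g n + 1
    choose x hx using hG
    obtain ⟨n, hlt, hle⟩ := ((hg (Finset.univ.image x)).and_eventually hev).exists
    have hmax : (Finset.univ.sup fun i => G i n) ≤ g n :=
      Finset.sup_le fun i _ =>
        hx i ▸ (hlt (x i) (Finset.mem_image_of_mem x (Finset.mem_univ i))).le
    omega

theorem exists_sUnion_subset_of_subset_range {α : Type*} {V : ℕ → Set α} (hV : Monotone V)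
    {ℱ : Set (Set α)} (hfin : ℱ.Finite) (hsub : ℱ ⊆ range V) : ∃ M, ⋃₀ ℱ ⊆ V M := by
  have hidx : ∀ s ∈ ℱ, ∃ m, V m = s := hsub
  choose! idx hidx using hidx
  obtain ⟨M, hM⟩ := (hfin.image idx).bddAbove
  exact ⟨M, sUnion_subset fun s hs => hidx s hs ▸ hV (hM (mem_image_of_mem idx hs))⟩

def HasFiniteSubcover {α : Type*} (𝒰 : Set (Set α)) : Prop :=
  ∃ ℱ ⊆ 𝒰, ℱ.Finite ∧ ⋃₀ ℱ = univ

section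

variable {α : Type*} [TopologicalSpace α]

theorem UfinOOmega.frequently_subset_of_forall_not_hasFiniteSubcover (hU : UfinOOmega α)
    {𝒰 : ℕ → Set (Set α)} (h𝒰 : ∀ n, (𝒰 n).Countable ∧ IsOpenCover (𝒰 n))
    (hfin : ∀ n, ¬ HasFiniteSubcover (𝒰 n)) :
    ∃ ℱ : ℕ → Set (Set α), (∀ n, (ℱ n).Finite ∧ ℱ n ⊆ 𝒰 n) ∧
      ∀ A : Set α, A.Finite → ∃ᶠ n in atTop, A ⊆ ⋃₀ ℱ n := by
  obtain ⟨ℱ, hℱ, hcov⟩ := hU 𝒰 h𝒰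
  have hne : ∀ n, ⋃₀ ℱ n ≠ univ := fun n h => hfin n ⟨ℱ n, (hℱ n).2, (hℱ n).1, h⟩
  have hΩ : IsOmegaCover {s | ∃ n, s = ⋃₀ ℱ n} := hcov.resolve_left fun ⟨n, hn⟩ => hne n hn
  refine ⟨ℱ, hℱ, fun A hA hev => ?_⟩
  obtain ⟨N, hN⟩ := eventually_atTop.mp hev
  -- Adding to `A` a point missed by each of the first `N` unions forces a later union.
  choose p hp using fun n => (ne_univ_iff_exists_notMem _).mp (hne n)
  obtain ⟨_, ⟨n, rfl⟩, hsub⟩ := hΩ.2 (A ∪ p '' Iio N) (hA.union ((finite_Iio N).image p))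
  rcases lt_or_ge n N with hn | hn
  · exact hp n (hsub (Or.inr (mem_image_of_mem p hn)))
  · exact hN n hn (subset_union_left.trans hsub)

theorem UfinOOmega.frequently_subset (hU : UfinOOmega α)
    {𝒰 : ℕ → Set (Set α)} (h𝒰 : ∀ n, (𝒰 n).Countable ∧ IsOpenCover (𝒰 n)) :
    ∃ ℱ : ℕ → Set (Set α), (∀ n, (ℱ n).Finite ∧ ℱ n ⊆ 𝒰 n) ∧
      ∀ A : Set α, A.Finite → ∃ᶠ n in atTop, A ⊆ ⋃₀ ℱ n := by
  classical
  by_cases hsub : ∃ᶠ n in atTop, HasFiniteSubcover (𝒰 n)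
  · refine ⟨fun n => if h : HasFiniteSubcover (𝒰 n) then h.choose else ∅, fun n => ?_,
      fun A _ => hsub.mono fun n hn => ?_⟩
    · dsimp only
      split_ifs with h
      exacts [⟨h.choose_spec.2.1, h.choose_spec.1⟩, ⟨finite_empty, empty_subset _⟩]
    · simp only [dif_pos hn, hn.choose_spec.2.2, subset_univ]
  · -- Shift the sequence past the last cover with a finite subcover.
    obtain ⟨N, hN⟩ := eventually_atTop.mp (not_frequently.mp hsub)
    obtain ⟨ℱ, hℱ, hfreq⟩ := hU.frequently_subset_of_forall_not_hasFiniteSubcover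
      (𝒰 := fun n => 𝒰 (n + N)) (fun n => h𝒰 _) (fun n => hN (n + N) (by omega))
    refine ⟨fun n => if N ≤ n then ℱ (n - N) else ∅, fun n => ?_, fun A hA => ?_⟩
    · dsimp only
      split_ifs with h
      · simpa [Nat.sub_add_cancel h] using hℱ (n - N)
      · exact ⟨finite_empty, empty_subset _⟩
    · exact (tendsto_add_atTop_nat N).frequently
        ((hfreq A hA).mono fun n hn => by simpa using hn)

theorem UfinOOmega.exists_frequently_lt (hU : UfinOOmega α) {Ψ : α → ℕ → ℕ}
    (hΨ : Continuous Ψ) :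
    ∃ g : ℕ → ℕ, ∀ A : Finset α, ∃ᶠ n in atTop, ∀ x ∈ A, Ψ x n < g n := by
  let V : ℕ → ℕ → Set α := fun n m => {x | Ψ x n ≤ m}
  have hVmono : ∀ n, Monotone (V n) := fun n _ _ hm _ hx => le_trans hx hm
  have hV : ∀ n, (range (V n)).Countable ∧ IsOpenCover (range (V n)) := fun n =>
    ⟨countable_range _,
      forall_mem_range.2 fun m =>
        ((continuous_apply n).comp hΨ).isOpen_preimage _ (isOpen_discrete (Iic m)),
      eq_univ_of_forall fun x => ⟨V n (Ψ x n), mem_range_self _, le_refl (Ψ x n)⟩⟩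
  obtain ⟨ℱ, hℱ, hfreq⟩ := hU.frequently_subset hV
  choose f hf using fun n =>
    exists_sUnion_subset_of_subset_range (hVmono n) (hℱ n).1 (hℱ n).2
  exact ⟨fun n => f n + 1, fun A => (hfreq A A.finite_toSet).mono fun n hn x hx =>
    Nat.lt_succ_of_le (hf n (hn hx))⟩

theorem exists_continuous_mem_of_isClopen {C : ℕ → Set α} (hC : ∀ m, IsClopen (C m))
    (hcov : ⋃ m, C m = univ) : ∃ ψ : α → ℕ, Continuous ψ ∧ ∀ x, x ∈ C (ψ x) := by
  classical
  have hex : ∀ x, ∃ m, x ∈ C m := fun x => mem_iUnion.1 (hcov ▸ mem_univ x)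
  refine ⟨fun x => Nat.find (hex x), IsLocallyConstant.continuous ?_,
    fun x => Nat.find_spec (hex x)⟩
  refine IsLocallyConstant.iff_isOpen_fiber.2 fun m => ?_
  have hfiber : (fun x => Nat.find (hex x)) ⁻¹' {m} = C m ∩ ⋂ j ∈ Iio m, (C j)ᶜ := by
    ext x
    simp [Nat.find_eq_iff]
  rw [hfiber]
  exact (hC m).isOpen.inter
    ((finite_Iio m).isOpen_biInter fun j _ => (hC j).isClosed.isOpen_compl)

theorem exists_isClopen_refinement [LindelofSpace α] [Nonempty α] {B : Set (Set α)}
    (hB : TopologicalSpace.IsTopologicalBasis B) (hBc : ∀ b ∈ B, IsClopen b)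
    {𝒰 : Set (Set α)} (h𝒰 : IsOpenCover 𝒰) :
    ∃ C : ℕ → Set α, (∀ m, IsClopen (C m)) ∧ (∀ m, ∃ u ∈ 𝒰, C m ⊆ u) ∧ ⋃ m, C m = univ := by
  let S := {b ∈ B | ∃ u ∈ 𝒰, b ⊆ u}
  have hS : univ ⊆ ⋃ b ∈ S, id b := fun x _ => by
    obtain ⟨u, hu, hxu⟩ := mem_sUnion.1 (h𝒰.2 ▸ mem_univ x)
    obtain ⟨b, hb, hxb, hbu⟩ := hB.exists_subset_of_mem_open hxu (h𝒰.1 u hu)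
    exact mem_biUnion ⟨hb, u, hu, hbu⟩ hxb
  obtain ⟨T, hTS, hTc, hTcov⟩ :=
    isLindelof_univ.elim_countable_subcover_image (fun b hb => (hBc b hb.1).isOpen) hS
  have hTne : T.Nonempty := by
    obtain ⟨x⟩ := ‹Nonempty α›
    obtain ⟨b, hb, -⟩ := mem_iUnion₂.1 (hTcov (mem_univ x))
    exact ⟨b, hb⟩
  obtain ⟨C, rfl⟩ := hTc.exists_eq_range hTne
  refine ⟨C, fun m => hBc _ (hTS (mem_range_self m)).1, fun m => (hTS (mem_range_self m)).2, ?_⟩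
  simpa [biUnion_range, univ_subset_iff] using hTcov

theorem ufinOOmega_of_forall_exists_frequently_lt [LindelofSpace α] {B : Set (Set α)}
    (hB : TopologicalSpace.IsTopologicalBasis B) (hBc : ∀ b ∈ B, IsClopen b)
    (H : ∀ Ψ : α → ℕ → ℕ, Continuous Ψ →
      ∃ g : ℕ → ℕ, ∀ A : Finset α, ∃ᶠ n in atTop, ∀ x ∈ A, Ψ x n < g n) :
    UfinOOmega α := by
  intro 𝒰 h𝒰
  cases isEmpty_or_nonempty α
  · exact ⟨fun _ => ∅, fun _ => ⟨finite_empty, empty_subset _⟩,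
      Or.inl ⟨0, Subsingleton.elim _ _⟩⟩
  choose C hCc hCu hCcov using fun n => exists_isClopen_refinement hB hBc (h𝒰 n).2
  choose u hu hCu using hCu
  choose ψ hψc hψ using fun n => exists_continuous_mem_of_isClopen (hCc n) (hCcov n)
  obtain ⟨g, hg⟩ := H (fun x n => ψ n x) (continuous_pi hψc)
  have hcov : ∀ A : Set α, A.Finite → ∃ n, A ⊆ ⋃₀ (u n '' Iio (g n)) := fun A hA => by
    obtain ⟨n, hn⟩ := (hg hA.toFinset).exists
    exact ⟨n, fun x hx =>
      ⟨_, mem_image_of_mem _ (hn x (hA.mem_toFinset.2 hx)), hCu n _ (hψ n x)⟩⟩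
  refine ⟨fun n => u n '' Iio (g n),
    fun n => ⟨(finite_Iio _).image _, image_subset_iff.2 fun m _ => hu n m⟩, Or.inr ⟨?_, ?_⟩⟩
  · refine eq_univ_of_forall fun x => ?_
    obtain ⟨n, hn⟩ := hcov {x} (finite_singleton x)
    exact ⟨_, ⟨n, rfl⟩, hn rfl⟩
  · intro A hA
    obtain ⟨n, hn⟩ := hcov A hA
    exact ⟨_, ⟨n, rfl⟩, hn⟩

end

/-- A zero-dimensional set of reals satisfies `Ufin(O,Ω)` iff no continuous
image of it in the Baire space is `k`-dominating for any `k`. -/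
theorem ufinOOmega_iff_no_kDominating_image (X : Set ℝ)
    (hX : ZeroDimensionalSet X) :
    UfinOOmega ↥X ↔
      ∀ Ψ : ↥X → (ℕ → ℕ), Continuous Ψ →
        ∀ k : ℕ, ¬ KDominating (Set.range Ψ) k := by
  obtain ⟨B, hB, hBc⟩ := hX
  simp only [forall_not_kDominating_range_iff]
  exact ⟨fun hU Ψ hΨ => hU.exists_frequently_lt hΨ,
    ufinOOmega_of_forall_exists_frequently_lt hB hBc⟩
end

section
/- The minimal cardinality of a set of reals that does not satisfy Ufin(O,Ω) equals 𝔡, the dominating number, i.e., the minimal cardinality of a dominating subset of ℕ^ℕ. -/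
open Filter

/-!
A space `X` failing `Ufin(O,Ω)` is infinite and carries countable open covers `𝒰ₙ = {uₙₖ}` with
no good selection. Sending each point `x` to `n ↦ (an index k with x ∈ uₙₖ)` and taking pointwise
maxima over finite sets of points gives a family of size `|X|`; were some `g` not dominated by it,
the selections `{uₙₖ : k ≤ g n}` would form an ω-cover. Hence `𝔡 ≤ non(Ufin(O,Ω))`.

Conversely, for a dominating `Y ⊆ ℕ^ℕ` let `Z = Y ∪ {finitely supported functions}`, of size `|Y|`.
For any bound `g` some finite `F ⊆ Z` has, at every coordinate, a member exceeding `g`, so the covers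
`{z : z n ≤ k}ₖ` of `Z` admit no good selection. Embedding the Baire space into the Cantor set
turns `Z` into a homeomorphic set of reals, giving `non(Ufin(O,Ω)) ≤ 𝔡`.
-/

open Set Function Topology Cardinal

section Covers

variable {α β : Type*}

lemma isOmegaCover_of_forall_finite {𝒱 : Set (Set α)}
    (h : ∀ F : Set α, F.Finite → ∃ V ∈ 𝒱, F ⊆ V) : IsOmegaCover 𝒱 :=
  ⟨sUnion_eq_univ_iff.2 fun x => (h {x} (finite_singleton x)).imp fun _ hV => ⟨hV.1, hV.2 rfl⟩, h⟩

variable [TopologicalSpace α] [TopologicalSpace β]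

lemma UfinOOmega.of_finite [Finite α] : UfinOOmega α := by
  intro 𝒰 h𝒰
  choose U hU hxU using fun n x => sUnion_eq_univ_iff.1 (h𝒰 n).2.2 x
  exact ⟨fun n => range (U n), fun n => ⟨finite_range _, range_subset_iff.2 (hU n)⟩,
    Or.inl ⟨0, sUnion_eq_univ_iff.2 fun x => ⟨U 0 x, mem_range_self x, hxU 0 x⟩⟩⟩

lemma UfinOOmega.of_surjective (h : UfinOOmega α) {f : α → β} (hf : Continuous f)
    (hsurj : Surjective f) : UfinOOmega β := by
  intro 𝒰 h𝒰
  obtain ⟨ℱ, hℱ, hsel⟩ := h (fun n => preimage f '' 𝒰 n) fun n =>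
    ⟨(h𝒰 n).1.image _, forall_mem_image.2 fun V hV => ((h𝒰 n).2.1 V hV).preimage hf,
      by rw [sUnion_image, ← preimage_iUnion₂, ← sUnion_eq_biUnion, (h𝒰 n).2.2, preimage_univ]⟩
  let ℱ' n := 𝒰 n ∩ preimage f ⁻¹' ℱ n
  have hpull : ∀ n, f ⁻¹' ⋃₀ ℱ' n = ⋃₀ ℱ n := fun n => by
    ext x
    constructor
    · rintro ⟨V, ⟨-, hV⟩, hxV⟩
      exact ⟨_, hV, hxV⟩
    · rintro ⟨s, hs, hxs⟩
      obtain ⟨V, hV, rfl⟩ := (hℱ n).2 hs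
      exact ⟨V, ⟨hV, hs⟩, hxs⟩
  refine ⟨ℱ', fun n => ⟨((hℱ n).1.preimage (preimage_injective.2 hsurj).injOn).subset
    inter_subset_right, inter_subset_left⟩, ?_⟩
  rcases hsel with ⟨n, hn⟩ | hω
  · refine Or.inl ⟨n, ?_⟩
    rwa [← hpull, preimage_eq_univ_iff, hsurj.range_eq, univ_subset_iff] at hn
  · refine Or.inr (isOmegaCover_of_forall_finite fun G hG => ?_)
    obtain ⟨V, ⟨n, rfl⟩, hV⟩ := hω.2 (surjInv hsurj '' G) (hG.image _)
    refine ⟨_, ⟨n, rfl⟩, fun y hy => ?_⟩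
    have hy' := hV (mem_image_of_mem _ hy)
    rwa [← hpull, mem_preimage, surjInv_eq hsurj] at hy'

end Covers

lemma Dominating.infinite {Y : Set (ℕ → ℕ)} (hY : Dominating Y) : Y.Infinite := by
  intro hfin
  obtain ⟨f, hfY, hf⟩ := hY fun n => hfin.toFinset.sup (· n) + 1
  obtain ⟨n, hn⟩ := hf.exists
  exact (Finset.le_sup (f := (· n)) (hfin.mem_toFinset.2 hfY)).not_gt hn

lemma exists_isOmegaCover_of_not_dominating {α : Type*} {u : ℕ → ℕ → Set α} {ι : α → ℕ → ℕ}
    (hι : ∀ x n, x ∈ u n (ι x n))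
    (h : ¬ Dominating (range fun E : Finset α => fun n => E.sup (ι · n))) :
    ∃ g : ℕ → ℕ, IsOmegaCover {s | ∃ n, s = ⋃₀ (u n '' Iic (g n))} := by
  simp only [Dominating, mem_range, exists_exists_eq_and, not_forall, not_exists] at h
  obtain ⟨g, hg⟩ := h
  refine ⟨g, isOmegaCover_of_forall_finite fun F hF => ?_⟩
  lift F to Finset α using hF
  obtain ⟨n, hn⟩ := (not_eventually.1 (hg F)).exists
  refine ⟨_, ⟨n, rfl⟩, fun x hx => mem_sUnion_of_mem (hι x n) (mem_image_of_mem _ ?_)⟩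
  exact (Finset.le_sup (f := (ι · n)) hx).trans (not_le.1 hn).le

lemma exists_dominating_mk_le_of_not_ufinOOmega {α : Type} [TopologicalSpace α]
    (h : ¬ UfinOOmega α) : ∃ D : Set (ℕ → ℕ), Dominating D ∧ #D ≤ #α := by
  have : Infinite α := not_finite_iff_infinite.1 fun _ => h UfinOOmega.of_finite
  simp only [UfinOOmega, not_forall, not_exists, not_and] at h
  obtain ⟨𝒰, h𝒰, hfail⟩ := h
  have hne : ∀ n, (𝒰 n).Nonempty := fun n =>
    (nonempty_sUnion.1 ((h𝒰 n).2.2 ▸ univ_nonempty)).imp fun _ hV => hV.1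
  choose u hu using fun n => (h𝒰 n).1.exists_eq_range (hne n)
  choose ι hι using fun x n => by
    simpa [hu n] using sUnion_eq_univ_iff.1 (h𝒰 n).2.2 x
  refine ⟨range fun E : Finset α => fun n => E.sup (ι · n), by_contra fun hD => ?_,
    mk_range_le.trans (mk_finset_of_infinite α).le⟩
  obtain ⟨g, hg⟩ := exists_isOmegaCover_of_not_dominating hι hD
  exact hfail (fun n => u n '' Iic (g n))
    (fun n => ⟨(finite_Iic _).image _, hu n ▸ image_subset_range _ _⟩) (Or.inr hg)

lemma exists_sUnion_subset_of_finite_subset_range {α : Type*} {s : ℕ → Set α} (hs : Monotone s)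
    {ℱ : Set (Set α)} (hfin : ℱ.Finite) (hsub : ℱ ⊆ range s) : ∃ m, ⋃₀ ℱ ⊆ s m := by
  obtain ⟨t, -, ht, rfl⟩ := exists_subset_image_finite_and.1
    ⟨ℱ, image_univ (f := s) ▸ hsub, hfin, rfl⟩
  obtain ⟨m, hm⟩ := ht.bddAbove
  exact ⟨m, sUnion_image s t ▸ iUnion₂_subset fun k hk => hs (hm hk)⟩

lemma not_ufinOOmega_of_forall_exists_finset_gt {Z : Set (ℕ → ℕ)}
    (h : ∀ g : ℕ → ℕ, ∃ F : Finset Z, ∀ n, ∃ z ∈ F, g n < (z : ℕ → ℕ) n) : ¬ UfinOOmega Z := by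
  intro hZ
  let s (n k : ℕ) : Set Z := {z | (z : ℕ → ℕ) n ≤ k}
  obtain ⟨ℱ, hℱ, hsel⟩ := hZ (fun n => range (s n)) fun n =>
    ⟨countable_range _,
      forall_mem_range.2 fun k =>
        (isOpen_discrete (Iic k)).preimage (f := fun z : Z => (z : ℕ → ℕ) n)
          ((continuous_apply n).comp continuous_subtype_val),
      sUnion_eq_univ_iff.2 fun z => ⟨_, mem_range_self ((z : ℕ → ℕ) n), le_refl ((z : ℕ → ℕ) n)⟩⟩
  choose g hg using fun n => exists_sUnion_subset_of_finite_subset_range (s := s n)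
    (fun _ _ hkk' _ hz => le_trans hz hkk') (hℱ n).1 (hℱ n).2
  obtain ⟨F, hF⟩ := h g
  obtain ⟨n, hn⟩ : ∃ n, ↑F ⊆ ⋃₀ ℱ n := by
    rcases hsel with ⟨n, hn⟩ | hω
    · exact ⟨n, hn ▸ subset_univ _⟩
    · obtain ⟨V, ⟨n, rfl⟩, hV⟩ := hω.2 F F.finite_toSet
      exact ⟨n, hV⟩
  obtain ⟨z, hzF, hz⟩ := hF n
  exact absurd hz (not_lt.2 (hg n (hn hzF)))

lemma Dominating.exists_finset_gt {Y : Set (ℕ → ℕ)} (hY : Dominating Y) (g : ℕ → ℕ) :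
    ∃ F : Finset ↥(Y ∪ range ((⇑) : (ℕ →₀ ℕ) → ℕ → ℕ)), ∀ n, ∃ z ∈ F, g n < (z : ℕ → ℕ) n := by
  classical
  obtain ⟨d, hdY, hd⟩ := hY fun n => g n + 1
  obtain ⟨N, hN⟩ := Filter.eventually_atTop.1 hd
  let q : ℕ →₀ ℕ := Finsupp.indicator (Finset.range N) fun m _ => g m + 1
  refine ⟨{⟨d, .inl hdY⟩, ⟨q, .inr (mem_range_self q)⟩}, fun n => ?_⟩
  simp only [Finset.mem_insert, Finset.mem_singleton, exists_eq_or_imp, exists_eq_left]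
  rcases lt_or_ge n N with hn | hn
  · exact .inr (by simp [q, Finsupp.indicator_apply, hn])
  · exact .inl (hN n hn)

lemma exists_isEmbedding_baire_real : ∃ e : (ℕ → ℕ) → ℝ, IsEmbedding e := by
  obtain ⟨ι, hι⟩ := exists_topology_isEmbedding_nat (ℕ → Bool)
  exact ⟨(↑) ∘ cantorSetHomeomorphNatToBool.symm ∘ cantorSpaceHomeomorphNatToCantorSpace.symm ∘
      Pi.map fun _ => ι,
    IsEmbedding.subtypeVal.comp <| cantorSetHomeomorphNatToBool.symm.isEmbedding.comp <|
      cantorSpaceHomeomorphNatToCantorSpace.symm.isEmbedding.comp <| .piMap fun _ => hι⟩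

lemma exists_real_not_ufinOOmega_mk_le {Y : Set (ℕ → ℕ)} (hY : Dominating Y) :
    ∃ X : Set ℝ, ¬ UfinOOmega X ∧ #X ≤ #Y := by
  obtain ⟨e, he⟩ := exists_isEmbedding_baire_real
  let Z := Y ∪ range ((⇑) : (ℕ →₀ ℕ) → ℕ → ℕ)
  let φ := (he.comp (IsEmbedding.subtypeVal (p := (· ∈ Z)))).toHomeomorph
  refine ⟨_, fun hX => not_ufinOOmega_of_forall_exists_finset_gt hY.exists_finset_gt
    (hX.of_surjective φ.symm.continuous φ.symm.surjective), ?_⟩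
  have hY₀ : ℵ₀ ≤ #Y := @aleph0_le_mk _ hY.infinite.to_subtype
  calc #(range (e ∘ ((↑) : Z → ℕ → ℕ))) ≤ #Z := mk_range_le
    _ ≤ #Y + #(range ((⇑) : (ℕ →₀ ℕ) → ℕ → ℕ)) := mk_union_le _ _
    _ ≤ #Y := add_le_of_le hY₀ le_rfl ((countable_range _).le_aleph0.trans hY₀)

/-- The critical cardinality of `Ufin(O,Ω)` — the least cardinality of a
set of reals not satisfying `Ufin(O,Ω)` — equals the dominating number `𝔡`. -/
theorem non_ufinOOmega_eq_dominating_number :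
    sInf {c : Cardinal | ∃ X : Set ℝ, ¬ UfinOOmega ↥X ∧ Cardinal.mk ↥X = c} =
    sInf {c : Cardinal | ∃ Y : Set (ℕ → ℕ), Dominating Y ∧ Cardinal.mk ↥Y = c} := by
  refine csInf_eq_csInf_of_forall_exists_le ?_ ?_
  · rintro _ ⟨X, hX, rfl⟩
    obtain ⟨Y, hY, hle⟩ := exists_dominating_mk_le_of_not_ufinOOmega hX
    exact ⟨_, ⟨Y, hY, rfl⟩, hle⟩
  · rintro _ ⟨Y, hY, rfl⟩
    obtain ⟨X, hX, hle⟩ := exists_real_not_ufinOOmega_mk_le hY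
    exact ⟨_, ⟨X, hX, rfl⟩, hle⟩
end
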